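/- arXiv:math/9409210 — 3 statements merged into one kernel-verified Lean document; each statement's English description precedes it below -/
import Mathlib

section
/- Let σ₁, σ₂ ∈ ℝ, let w be an admissible weight function, and let u, v : ℕ × ℤ → ℂ satisfy ‖u‖_{σ₁,w} := ∑_{m∈ℤ} w(m) sup_{n≥0} e^{σ₁ n}|u(n,m)| < ∞ and ‖v‖_{σ₂,w} < ∞. Define their m-convolution y(n,m) := ∑_{l∈ℤ} u(n,m-l)v(n,l). Then ‖y‖_{σ₁+σ₂,w} ≤ ‖u‖_{σ₁,w} · ‖v‖_{σ₂,w}. -/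
/-!
Put `U m = sup_n e^{σ₁ n} |u(n, m)|` and `V m = sup_n e^{σ₂ n} |v(n, m)|`. For every `n`,
`e^{(σ₁+σ₂) n} |y(n, m)| ≤ ∑_l U(m - l) V(l)`, so the `m`-th term of `‖y‖_{σ₁+σ₂,w}` is at most
`w(m) (U ⋆ V)(m) ≤ ((w U) ⋆ (w V))(m)` by submultiplicativity of `w`. Summing over `m`, the
convolution of the nonnegative summable sequences `w U` and `w V` has sum
`‖u‖_{σ₁,w} ‖v‖_{σ₂,w}`: reindex `ℤ × ℤ` by the shear `(a, b) ↦ (a + b, b)`.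
-/

open Real

noncomputable section

section Convolution

variable {G : Type*} [AddGroup G]

def discreteConv {R : Type*} [NonUnitalNonAssocSemiring R] [TopologicalSpace R]
    (f g : G → R) (m : G) : R :=
  ∑' l, f (m - l) * g l

variable {F F' : G → ℝ}

theorem hasSum_prod_sub_mul (hF0 : 0 ≤ F) (hF'0 : 0 ≤ F') (hF : Summable F) (hF' : Summable F') :
    HasSum (fun p : G × G => F (p.1 - p.2) * F' p.2) ((∑' m, F m) * ∑' m, F' m) := by
  let shear : G × G ≃ G × G :=
    { toFun := fun p => (p.1 + p.2, p.2)
      invFun := fun p => (p.1 - p.2, p.2)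
      left_inv := fun p => by simp
      right_inv := fun p => by simp }
  have hprod := hF.mul_of_nonneg hF' hF0 hF'0
  rw [← shear.hasSum_iff, hF.tsum_mul_tsum hF' hprod]
  simpa [shear, Function.comp_def] using hprod.hasSum

theorem summable_sub_mul (hF0 : 0 ≤ F) (hF'0 : 0 ≤ F') (hF : Summable F) (hF' : Summable F')
    (m : G) : Summable fun l => F (m - l) * F' l :=
  (hasSum_prod_sub_mul hF0 hF'0 hF hF').summable.prod_factor m

theorem hasSum_discreteConv (hF0 : 0 ≤ F) (hF'0 : 0 ≤ F') (hF : Summable F) (hF' : Summable F') :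
    HasSum (discreteConv F F') ((∑' m, F m) * ∑' m, F' m) :=
  (hasSum_prod_sub_mul hF0 hF'0 hF hF').prod_fiberwise fun m =>
    (summable_sub_mul hF0 hF'0 hF hF' m).hasSum

theorem norm_discreteConv_le {R : Type*} [NonUnitalSeminormedRing R] {f g : G → R}
    (hf : ∀ k, ‖f k‖ ≤ F k) (hg : ∀ k, ‖g k‖ ≤ F' k) (hF : Summable F) (hF' : Summable F')
    (m : G) : ‖discreteConv f g m‖ ≤ discreteConv F F' m := by
  have hF0 : 0 ≤ F := fun k => (norm_nonneg _).trans (hf k)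
  have hF'0 : 0 ≤ F' := fun k => (norm_nonneg _).trans (hg k)
  have hterm : ∀ l, ‖f (m - l) * g l‖ ≤ F (m - l) * F' l := fun l =>
    (norm_mul_le _ _).trans (mul_le_mul (hf _) (hg _) (norm_nonneg _) (hF0 _))
  have hsum := summable_sub_mul hF0 hF'0 hF hF' m
  have hnorm : Summable fun l => ‖f (m - l) * g l‖ :=
    hsum.of_nonneg_of_le (fun _ => norm_nonneg _) hterm
  exact (norm_tsum_le_tsum_norm hnorm).trans (hnorm.tsum_le_tsum hterm hsum)

end Convolution

section Weight

variable {G : Type*} [AddGroup G]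

structure IsAdmissibleWeight (w : G → ℝ) : Prop where
  one_le : ∀ m, 1 ≤ w m
  le_mul : ∀ m n, w m ≤ w (m - n) * w n

namespace IsAdmissibleWeight

variable {w F F' : G → ℝ}

theorem nonneg (hw : IsAdmissibleWeight w) (m : G) : 0 ≤ w m :=
  zero_le_one.trans (hw.one_le m)

theorem summable_of_summable_mul (hw : IsAdmissibleWeight w) (hF0 : 0 ≤ F)
    (hF : Summable fun m => w m * F m) : Summable F :=
  hF.of_nonneg_of_le hF0 fun m => le_mul_of_one_le_left (hF0 m) (hw.one_le m)

theorem mul_discreteConv_le (hw : IsAdmissibleWeight w) (hF0 : 0 ≤ F) (hF'0 : 0 ≤ F')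
    (hF : Summable fun m => w m * F m) (hF' : Summable fun m => w m * F' m) (m : G) :
    w m * discreteConv F F' m ≤
      discreteConv (fun k => w k * F k) (fun k => w k * F' k) m := by
  have hterm : ∀ l, w m * (F (m - l) * F' l) ≤ w (m - l) * F (m - l) * (w l * F' l) := fun l =>
    calc w m * (F (m - l) * F' l) ≤ w (m - l) * w l * (F (m - l) * F' l) :=
          mul_le_mul_of_nonneg_right (hw.le_mul m l) (mul_nonneg (hF0 _) (hF'0 _))
      _ = w (m - l) * F (m - l) * (w l * F' l) := by ring
  have hsum := summable_sub_mul (fun k => mul_nonneg (hw.nonneg k) (hF0 k))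
    (fun k => mul_nonneg (hw.nonneg k) (hF'0 k)) hF hF' m
  rw [discreteConv, ← tsum_mul_left]
  exact Summable.tsum_le_tsum hterm
    (hsum.of_nonneg_of_le (fun l => mul_nonneg (hw.nonneg m) (mul_nonneg (hF0 _) (hF'0 _))) hterm)
    hsum

end IsAdmissibleWeight

end Weight

section WeightedNorm

variable {G E : Type*}

/-- `expSup σ u m = sup_{n ≥ 0} e^{σ n} ‖u(n, m)‖`; it is `0` when the supremum is infinite. -/
def expSup [Norm E] (σ : ℝ) (u : ℕ → G → E) (m : G) : ℝ :=
  ⨆ n : ℕ, exp (σ * n) * ‖u n m‖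

def weightedNorm [Norm E] (σ : ℝ) (w : G → ℝ) (u : ℕ → G → E) : ℝ :=
  ∑' m, w m * expSup σ u m

theorem expSup_nonneg [SeminormedAddGroup E] (σ : ℝ) (u : ℕ → G → E) (m : G) : 0 ≤ expSup σ u m :=
  Real.iSup_nonneg fun _ => by positivity

theorem norm_le_exp_neg_mul_expSup [Norm E] {σ : ℝ} {u : ℕ → G → E} {m : G}
    (hu : BddAbove (Set.range fun n : ℕ => exp (σ * n) * ‖u n m‖)) (n : ℕ) :
    ‖u n m‖ ≤ exp (-(σ * n)) * expSup σ u m := by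
  rw [exp_neg, inv_mul_eq_div, le_div_iff₀ (exp_pos _), mul_comm]
  exact le_ciSup hu n

variable [AddGroup G] [NonUnitalSeminormedRing E] {σ₁ σ₂ : ℝ} {u v : ℕ → G → E}

theorem expSup_discreteConv_le
    (hub : ∀ m, BddAbove (Set.range fun n : ℕ => exp (σ₁ * n) * ‖u n m‖))
    (hvb : ∀ m, BddAbove (Set.range fun n : ℕ => exp (σ₂ * n) * ‖v n m‖))
    (hU : Summable (expSup σ₁ u)) (hV : Summable (expSup σ₂ v)) (m : G) :
    expSup (σ₁ + σ₂) (fun n => discreteConv (u n) (v n)) m ≤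
      discreteConv (expSup σ₁ u) (expSup σ₂ v) m := by
  refine ciSup_le fun n => ?_
  have hexp : exp ((σ₁ + σ₂) * n) * (exp (-(σ₁ * n)) * exp (-(σ₂ * n))) = 1 := by
    rw [← exp_add, ← exp_add, ← exp_zero]
    ring_nf
  have hconv := norm_discreteConv_le (fun k => norm_le_exp_neg_mul_expSup (hub k) n)
    (fun k => norm_le_exp_neg_mul_expSup (hvb k) n) (hU.mul_left _) (hV.mul_left _) m
  calc exp ((σ₁ + σ₂) * n) * ‖discreteConv (u n) (v n) m‖
      ≤ exp ((σ₁ + σ₂) * n) * discreteConv (fun k => exp (-(σ₁ * n)) * expSup σ₁ u k)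
          (fun k => exp (-(σ₂ * n)) * expSup σ₂ v k) m := by gcongr
    _ = discreteConv (expSup σ₁ u) (expSup σ₂ v) m := by
      rw [discreteConv, discreteConv, ← tsum_mul_left]
      refine tsum_congr fun l => ?_
      linear_combination (expSup σ₁ u (m - l) * expSup σ₂ v l) * hexp

theorem weightedNorm_discreteConv_le {w : G → ℝ} (hw : IsAdmissibleWeight w)
    (hub : ∀ m, BddAbove (Set.range fun n : ℕ => exp (σ₁ * n) * ‖u n m‖))
    (hvb : ∀ m, BddAbove (Set.range fun n : ℕ => exp (σ₂ * n) * ‖v n m‖))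
    (hu : Summable fun m => w m * expSup σ₁ u m) (hv : Summable fun m => w m * expSup σ₂ v m) :
    weightedNorm (σ₁ + σ₂) w (fun n => discreteConv (u n) (v n)) ≤
      weightedNorm σ₁ w u * weightedNorm σ₂ w v := by
  have hU0 : 0 ≤ expSup σ₁ u := expSup_nonneg σ₁ u
  have hV0 : 0 ≤ expSup σ₂ v := expSup_nonneg σ₂ v
  have hbound : ∀ m, w m * expSup (σ₁ + σ₂) (fun n => discreteConv (u n) (v n)) m ≤
      discreteConv (fun k => w k * expSup σ₁ u k) (fun k => w k * expSup σ₂ v k) m := fun m =>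
    (mul_le_mul_of_nonneg_left (expSup_discreteConv_le hub hvb
      (hw.summable_of_summable_mul hU0 hu) (hw.summable_of_summable_mul hV0 hv) m)
      (hw.nonneg m)).trans (hw.mul_discreteConv_le hU0 hV0 hu hv m)
  have hconv := hasSum_discreteConv (fun k => mul_nonneg (hw.nonneg k) (hU0 k))
    (fun k => mul_nonneg (hw.nonneg k) (hV0 k)) hu hv
  rw [weightedNorm, weightedNorm, weightedNorm, ← hconv.tsum_eq]
  exact Summable.tsum_le_tsum hbound (hconv.summable.of_nonneg_of_le
    (fun m => mul_nonneg (hw.nonneg m) (expSup_nonneg _ _ m)) hbound) hconv.summable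

end WeightedNorm

end

/-- The m-convolution satisfies ‖y‖_{σ₁+σ₂,w} ≤ ‖u‖_{σ₁,w}·‖v‖_{σ₂,w}. -/
theorem m_convolution_norm_estimate (σ₁ σ₂ : ℝ) (w : ℤ → ℝ)
    (h1 : ∀ m, 1 ≤ w m) (h2 : ∀ m n, w m ≤ w (m - n) * w n)
    (u v : ℕ → ℤ → ℂ)
    (hub : ∀ m : ℤ, BddAbove (Set.range fun n : ℕ => Real.exp (σ₁ * n) * ‖u n m‖))
    (hvb : ∀ m : ℤ, BddAbove (Set.range fun n : ℕ => Real.exp (σ₂ * n) * ‖v n m‖))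
    (hu : Summable fun m : ℤ => w m * ⨆ n : ℕ, Real.exp (σ₁ * n) * ‖u n m‖)
    (hv : Summable fun m : ℤ => w m * ⨆ n : ℕ, Real.exp (σ₂ * n) * ‖v n m‖) :
    ∑' m : ℤ, w m * ⨆ n : ℕ, Real.exp ((σ₁ + σ₂) * n) *
        ‖∑' l : ℤ, u n (m - l) * v n l‖ ≤
      (∑' m : ℤ, w m * ⨆ n : ℕ, Real.exp (σ₁ * n) * ‖u n m‖) *
      (∑' m : ℤ, w m * ⨆ n : ℕ, Real.exp (σ₂ * n) * ‖v n m‖) :=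
  weightedNorm_discreteConv_le ⟨h1, h2⟩ hub hvb hu hv
end

section
/- Let δ ∈ ℝ with |δ| < 2, β = -arccos(-δ/2), σ > 0, and let (y_n)_{n≥1} be a complex sequence with sup_{n≥1}|y_n e^{σn}| < ∞. Suppose (u_n)_{n≥0} with u₀ = 0 satisfies u_{n-1} + δu_n + u_{n+1} = y_n for all n ≥ 1, and the two conditions u₁ + ∑_{k=1}^∞ y_k cos(kβ) = 0 and ∑_{k=1}^∞ y_k sin(kβ) = 0. Then sup_{n≥1}|u_n e^{σn}| < ∞, i.e. u decays exponentially. -/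
/-!
Since `δ = -2 cos β`, the recursion reads `u_{n-1} - 2 cos β u_n + u_{n+1} = y_n`, and both
`n ↦ sin β · u_n` and `n ↦ sin(nβ) P_n - cos(nβ) Q_n`, with `P_n = u₁ + ∑_{k ≤ n} y_k cos(kβ)` and
`Q_n = ∑_{k ≤ n} y_k sin(kβ)`, solve `w_{n+1} = 2 cos β w_n - w_{n-1} + sin β y_n` with the same
initial values, so they agree. The orthogonality conditions say `P_n, Q_n → 0`, so both are tails of
series dominated by `e^{-σk}` and are `O(e^{-σn})`; as `|δ| < 2` forces `sin β ≠ 0`, so is `u_n`.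
-/

open Finset Filter Topology

theorem eq_of_two_step_recurrence {α : Type*} (F : ℕ → α → α → α) {v w : ℕ → α}
    (hv : ∀ n, v (n + 2) = F n (v n) (v (n + 1))) (hw : ∀ n, w (n + 2) = F n (w n) (w (n + 1)))
    (h0 : v 0 = w 0) (h1 : v 1 = w 1) : v = w := by
  funext n
  induction n using Nat.twoStepInduction with
  | zero => exact h0
  | one => exact h1
  | more n ihn ihn1 => rw [hv, hw, ihn, ihn1]

theorem sin_mul_eq_of_recurrence (β : ℝ) {u y : ℕ → ℂ} (hu0 : u 0 = 0)
    (hrec : ∀ n, u n - 2 * Real.cos β * u (n + 1) + u (n + 2) = y (n + 1)) (n : ℕ) :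
    Real.sin β * u n =
      Real.sin (n * β) * (u 1 + ∑ k ∈ range n, y (k + 1) * Real.cos ((k + 1) * β)) -
        Real.cos (n * β) * ∑ k ∈ range n, y (k + 1) * Real.sin ((k + 1) * β) := by
  refine congrFun (eq_of_two_step_recurrence (v := fun n ↦ Real.sin β * u n)
    (w := fun n ↦ Real.sin (n * β) * (u 1 + ∑ k ∈ range n, y (k + 1) * Real.cos ((k + 1) * β)) -
        Real.cos (n * β) * ∑ k ∈ range n, y (k + 1) * Real.sin ((k + 1) * β))
    (fun n a b ↦ 2 * Real.cos β * b - a + Real.sin β * y (n + 1)) ?_ ?_ ?_ ?_) n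
  · intro n
    linear_combination Real.sin β * hrec n
  · intro n
    set x := ((n : ℝ) + 1) * β
    have hS : (Real.sin (x + β) : ℂ) + Real.sin (x - β) = 2 * Real.cos β * Real.sin x := by
      exact_mod_cast (by rw [Real.sin_add, Real.sin_sub]; ring)
    have hC : (Real.cos (x + β) : ℂ) + Real.cos (x - β) = 2 * Real.cos β * Real.cos x := by
      exact_mod_cast (by rw [Real.cos_add, Real.cos_sub]; ring)
    have hW :
        (Real.sin (x + β) : ℂ) * Real.cos x - Real.cos (x + β) * Real.sin x = Real.sin β := by
      exact_mod_cast (by rw [← Real.sin_sub, add_sub_cancel_left])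
    simp only [sum_range_succ, Nat.cast_add, Nat.cast_one, Nat.cast_ofNat]
    rw [show ((n : ℝ) + 2) * β = x + β by ring, show (n : ℝ) * β = x - β by ring,
      show ((n : ℝ) + 1 + 1) * β = x + β by ring]
    linear_combination (u 1 + ∑ k ∈ range n, y (k + 1) * Real.cos ((k + 1) * β)) * hS -
      (∑ k ∈ range n, y (k + 1) * Real.sin ((k + 1) * β)) * hC + y (n + 1) * hW
  · simp [hu0]
  · simp only [sum_range_one, Nat.cast_zero, Nat.cast_one, zero_add, one_mul]
    ring

theorem norm_add_sum_range_le_of_add_tsum_eq_zero {E : Type*} [NormedAddCommGroup E]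
    [CompleteSpace E] {a : E} {f : ℕ → E} {C r : ℝ} (hr0 : 0 ≤ r) (hr1 : r < 1)
    (hf : ∀ k, ‖f k‖ ≤ C * r ^ k) (ha : a + ∑' k, f k = 0) (n : ℕ) :
    ‖a + ∑ k ∈ range n, f k‖ ≤ C * r ^ n / (1 - r) := by
  have hs : Summable f :=
    Summable.of_norm_bounded ((summable_geometric_of_lt_one hr0 hr1).mul_left C) hf
  have hlim : Tendsto (fun n ↦ a + ∑ k ∈ range n, f k) atTop (𝓝 0) :=
    ha ▸ hs.hasSum.tendsto_sum_nat.const_add a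
  have hstep (n : ℕ) :
      dist (a + ∑ k ∈ range n, f k) (a + ∑ k ∈ range (n + 1), f k) ≤ C * r ^ n := by
    rw [dist_comm, dist_eq_norm, sum_range_succ, ← add_assoc, add_sub_cancel_left]
    exact hf n
  simpa only [dist_zero_right] using dist_le_of_le_geometric_of_tendsto r C hr1 hstep hlim n

theorem norm_ofReal_sin_mul_sub_ofReal_cos_mul_le (θ : ℝ) (P Q : ℂ) :
    ‖Real.sin θ * P - Real.cos θ * Q‖ ≤ ‖P‖ + ‖Q‖ := by
  refine (norm_sub_le _ _).trans (add_le_add ?_ ?_) <;>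
    rw [norm_mul, Complex.norm_real, Real.norm_eq_abs]
  · exact mul_le_of_le_one_left (norm_nonneg P) (Real.abs_sin_le_one θ)
  · exact mul_le_of_le_one_left (norm_nonneg Q) (Real.abs_cos_le_one θ)

theorem norm_mul_ofReal_le (z : ℂ) {x : ℝ} (hx : |x| ≤ 1) : ‖z * x‖ ≤ ‖z‖ := by
  rw [norm_mul, Complex.norm_real, Real.norm_eq_abs]
  exact mul_le_of_le_one_right (norm_nonneg z) hx

theorem norm_le_mul_pow_of_recurrence (β : ℝ) (hβ : Real.sin β ≠ 0) {u y : ℕ → ℂ}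
    (hu0 : u 0 = 0) (hrec : ∀ n, u n - 2 * Real.cos β * u (n + 1) + u (n + 2) = y (n + 1))
    {M r : ℝ} (hr0 : 0 ≤ r) (hr1 : r < 1) (hy : ∀ n, 1 ≤ n → ‖y n‖ ≤ M * r ^ n)
    (hcos : u 1 + ∑' k : ℕ, y (k + 1) * (Real.cos (((k : ℝ) + 1) * β) : ℂ) = 0)
    (hsin : (∑' k : ℕ, y (k + 1) * (Real.sin (((k : ℝ) + 1) * β) : ℂ)) = 0) (n : ℕ) :
    ‖u n‖ ≤ 2 * M * r / (1 - r) / |Real.sin β| * r ^ n := by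
  have hyk (k : ℕ) : ‖y (k + 1)‖ ≤ M * r * r ^ k := by
    simpa only [pow_succ', mul_assoc] using hy (k + 1) k.succ_pos
  have hP := norm_add_sum_range_le_of_add_tsum_eq_zero hr0 hr1
    (fun k ↦ (norm_mul_ofReal_le _ (Real.abs_cos_le_one _)).trans (hyk k)) hcos n
  have hQ := norm_add_sum_range_le_of_add_tsum_eq_zero (a := 0) hr0 hr1
    (fun k ↦ (norm_mul_ofReal_le _ (Real.abs_sin_le_one _)).trans (hyk k)) (by rwa [zero_add]) n
  rw [zero_add] at hQ
  have key : |Real.sin β| * ‖u n‖ ≤ 2 * M * r / (1 - r) * r ^ n := by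
    calc |Real.sin β| * ‖u n‖ = ‖(Real.sin β : ℂ) * u n‖ := by
          rw [norm_mul, Complex.norm_real, Real.norm_eq_abs]
      _ ≤ _ := by
          rw [sin_mul_eq_of_recurrence β hu0 hrec n]
          exact norm_ofReal_sin_mul_sub_ofReal_cos_mul_le _ _ _
      _ ≤ M * r * r ^ n / (1 - r) + M * r * r ^ n / (1 - r) := add_le_add hP hQ
      _ = 2 * M * r / (1 - r) * r ^ n := by ring
  rwa [div_mul_eq_mul_div, le_div_iff₀ (abs_pos.mpr hβ), mul_comm]

theorem mul_exp_le_iff_le_mul_exp_neg_pow {a M σ : ℝ} {n : ℕ} :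
    a * Real.exp (σ * n) ≤ M ↔ a ≤ M * Real.exp (-σ) ^ n := by
  rw [← Real.exp_nat_mul, mul_neg, Real.exp_neg, ← div_eq_mul_inv, le_div_iff₀ (Real.exp_pos _),
    mul_comm σ]

theorem sin_neg_arccos_ne_zero {x : ℝ} (hx : |x| < 1) : Real.sin (-Real.arccos x) ≠ 0 := by
  rw [Real.sin_neg, Real.sin_arccos, neg_ne_zero, Real.sqrt_ne_zero']
  nlinarith [sq_lt_one_iff_abs_lt_one x |>.mpr hx]

/-- If the forcing decays exponentially and the two orthogonality conditions hold,
then the solution of the resonant recursion decays exponentially. -/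
theorem resonant_solution_exponential_decay (δ : ℝ) (hδ : |δ| < 2) (β : ℝ)
    (hβ : β = -Real.arccos (-δ / 2)) (σ : ℝ) (hσ : 0 < σ) (y u : ℕ → ℂ)
    (hy : ∃ M : ℝ, ∀ n : ℕ, 1 ≤ n → ‖y n‖ * Real.exp (σ * n) ≤ M)
    (hu0 : u 0 = 0)
    (hrec : ∀ n : ℕ, 1 ≤ n → u (n - 1) + (δ : ℂ) * u n + u (n + 1) = y n)
    (hcos : u 1 + ∑' k : ℕ, y (k + 1) * (Real.cos (((k : ℝ) + 1) * β) : ℂ) = 0)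
    (hsin : (∑' k : ℕ, y (k + 1) * (Real.sin (((k : ℝ) + 1) * β) : ℂ)) = 0) :
    ∃ M : ℝ, ∀ n : ℕ, 1 ≤ n → ‖u n‖ * Real.exp (σ * n) ≤ M := by
  obtain ⟨M, hM⟩ := hy
  have hδ2 : |-δ / 2| < 1 := by rw [abs_div, abs_neg, abs_two]; linarith
  have hδβ : (δ : ℂ) = -(2 * Real.cos β) := by
    rw [hβ, Real.cos_neg, Real.cos_arccos (by linarith [neg_abs_le (-δ / 2)])
      (by linarith [le_abs_self (-δ / 2)])]
    push_cast; ring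
  have hrec' (n : ℕ) : u n - 2 * Real.cos β * u (n + 1) + u (n + 2) = y (n + 1) := by
    rw [← hrec (n + 1) n.succ_pos, Nat.add_sub_cancel, hδβ]; ring
  exact ⟨_, fun n _ ↦ mul_exp_le_iff_le_mul_exp_neg_pow.mpr <|
    norm_le_mul_pow_of_recurrence β (hβ ▸ sin_neg_arccos_ne_zero hδ2) hu0 hrec'
      (Real.exp_pos _).le (Real.exp_lt_one_iff.mpr (neg_lt_zero.mpr hσ))
      (fun n hn ↦ mul_exp_le_iff_le_mul_exp_neg_pow.mp (hM n hn)) hcos hsin n⟩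
end

section
/- Let Λ(t) be a diagonal matrix of distinct real eigenvalues λ_j(t) of the real symmetric N×N matrix L_N(t), and let Ψ(t) be the orthogonal matrix of normalized eigenvectors, so L_N Ψ = ΨΛ. Suppose L_N satisfies dL_N/dt = [B_N, L_N] − ρ(t)P where B_N is antisymmetric, P = e₁e₁ᵀ is the rank-one projection onto the first coordinate, and ρ(t) ∈ ℝ. Let f denote the first row of Ψ (so f_j is the first component of the j-th normalized eigenvector). Then the matrix A := ΨᵀΨ̇ − ΨᵀB_NΨ is antisymmetric, and the eigenvalues satisfy λ̇_j = −ρ·f_j² for each j, and consequently ∑_{j=1}^N λ̇_j = −ρ. -/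
/-!
Differentiating `ΨᵀΨ = 1` shows that `ΨᵀΨ̇` is antisymmetric, and `ΨᵀBΨ` is antisymmetric
with `B`. Differentiating `ΨᵀLΨ = Λ` gives `Λ̇ = Ψ̇ᵀΨΛ + ΨᵀL̇Ψ + ΛΨᵀΨ̇`, whose diagonal is
that of `ΨᵀL̇Ψ = [ΨᵀBΨ, Λ] - ρ ΨᵀPΨ`; a commutator with a diagonal matrix has zero
diagonal, and `(ΨᵀPΨ)ⱼⱼ = f_j²`. The sum is `-ρ` because the rows of `Ψ` are unit vectors.
-/

open Matrix

variable {𝕜 : Type*} [NontriviallyNormedField 𝕜] {m n p : Type*}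

def HasEntrywiseDerivAt (M : 𝕜 → Matrix m n 𝕜) (M' : Matrix m n 𝕜) (t : 𝕜) : Prop :=
  ∀ i j, HasDerivAt (fun s => M s i j) (M' i j) t

namespace HasEntrywiseDerivAt

variable {M : 𝕜 → Matrix m n 𝕜} {M' : Matrix m n 𝕜} {t : 𝕜}

theorem transpose (hM : HasEntrywiseDerivAt M M' t) :
    HasEntrywiseDerivAt (fun s => (M s)ᵀ) M'ᵀ t :=
  fun i j => hM j i

theorem mul [Fintype n] {K : 𝕜 → Matrix n p 𝕜} {K' : Matrix n p 𝕜}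
    (hM : HasEntrywiseDerivAt M M' t) (hK : HasEntrywiseDerivAt K K' t) :
    HasEntrywiseDerivAt (fun s => M s * K s) (M' * K t + M t * K') t := by
  intro i j
  simpa only [mul_apply, Matrix.add_apply, Finset.sum_add_distrib] using
    HasDerivAt.fun_sum fun k _ => (hM i k).fun_mul (hK k j)

theorem unique {M'' : Matrix m n 𝕜} (hM : HasEntrywiseDerivAt M M' t)
    (hM'' : HasEntrywiseDerivAt M M'' t) : M' = M'' :=
  Matrix.ext fun i j => (hM i j).unique (hM'' i j)

end HasEntrywiseDerivAt

theorem hasEntrywiseDerivAt_const (A : Matrix m n 𝕜) (t : 𝕜) :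
    HasEntrywiseDerivAt (fun _ => A) 0 t :=
  fun i j => hasDerivAt_const t (A i j)

theorem hasEntrywiseDerivAt_diagonal [DecidableEq n] {d : 𝕜 → n → 𝕜} {d' : n → 𝕜} {t : 𝕜}
    (hd : ∀ j, HasDerivAt (fun s => d s j) (d' j) t) :
    HasEntrywiseDerivAt (fun s => diagonal (d s)) (diagonal d') t := by
  intro i j
  by_cases hij : i = j
  · subst hij
    simpa only [diagonal_apply_eq] using hd i
  · simpa only [diagonal_apply_ne _ hij] using hasDerivAt_const t (0 : 𝕜)

namespace Matrix

variable {R : Type*} [CommRing R] [Fintype n]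

theorem transpose_conj_eq_neg {B : Matrix n n R} (hB : Bᵀ = -B) (Q : Matrix n n R) :
    (Qᵀ * B * Q)ᵀ = -(Qᵀ * B * Q) := by
  rw [transpose_mul, transpose_mul, transpose_transpose, hB]
  noncomm_ring

variable [DecidableEq n]

theorem mul_diagonal_sub_diagonal_mul_apply_self (M : Matrix n n R) (d : n → R) (j : n) :
    (M * diagonal d - diagonal d * M) j j = 0 := by
  rw [sub_apply, mul_diagonal, diagonal_mul, mul_comm, sub_self]

theorem conj_single_apply_self (Q : Matrix n n R) (i j : n) :
    (Qᵀ * single i i (1 : R) * Q) j j = Q i j ^ 2 := by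
  simp [mul_apply, single, ite_and, mul_ite, mul_comm, sq]

theorem sum_sq_apply_eq_one {Q : Matrix n n R} (hQ : Qᵀ * Q = 1) (i : n) :
    ∑ j, Q i j ^ 2 = 1 := by
  simpa [mul_apply, sq] using congrArg (fun M => M i i) (mul_eq_one_comm.mp hQ)

theorem transpose_mul_eq_diagonal_mul {Q L : Matrix n n R} {d : n → R} (hQ : Qᵀ * Q = 1)
    (hLQ : L * Q = Q * diagonal d) : Qᵀ * L = diagonal d * Qᵀ := by
  calc Qᵀ * L = Qᵀ * (L * Q) * Qᵀ := by
        rw [Matrix.mul_assoc, Matrix.mul_assoc, mul_eq_one_comm.mp hQ, Matrix.mul_one]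
    _ = diagonal d * Qᵀ := by rw [hLQ, ← Matrix.mul_assoc, hQ, Matrix.one_mul]

/-- Hellmann–Feynman: the eigenvector terms cancel because `QᵀQ'` is antisymmetric. -/
theorem deriv_conj_apply_self_of_orthogonal {Q Q' L L' : Matrix n n R} {d : n → R}
    (hQ : Qᵀ * Q = 1) (hQ' : Q'ᵀ * Q + Qᵀ * Q' = 0) (hLQ : L * Q = Q * diagonal d) (j : n) :
    ((Q'ᵀ * L + Qᵀ * L') * Q + Qᵀ * L * Q') j j = (Qᵀ * L' * Q) j j := by
  have hQL := transpose_mul_eq_diagonal_mul hQ hLQ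
  have hjj := congrFun (congrFun hQ' j) j
  rw [add_apply, zero_apply] at hjj
  have expand : (Q'ᵀ * L + Qᵀ * L') * Q + Qᵀ * L * Q' =
      Q'ᵀ * Q * diagonal d + Qᵀ * L' * Q + diagonal d * (Qᵀ * Q') := by
    rw [hQL, Matrix.add_mul, Matrix.mul_assoc Q'ᵀ, hLQ, Matrix.mul_assoc (diagonal d)]
    noncomm_ring
  rw [expand, add_apply, add_apply, mul_diagonal, diagonal_mul]
  linear_combination d j * hjj

theorem conj_forced_lax_apply_self {Q L B : Matrix n n R} {d : n → R} (hQ : Qᵀ * Q = 1)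
    (hLQ : L * Q = Q * diagonal d) (r : R) (i j : n) :
    (Qᵀ * (B * L - L * B - r • single i i (1 : R)) * Q) j j = -r * Q i j ^ 2 := by
  have hQL := transpose_mul_eq_diagonal_mul hQ hLQ
  have commutator : Qᵀ * (B * L - L * B) * Q =
      Qᵀ * B * Q * diagonal d - diagonal d * (Qᵀ * B * Q) := by
    rw [Matrix.mul_sub, Matrix.sub_mul, ← Matrix.mul_assoc, ← Matrix.mul_assoc, hQL,
      Matrix.mul_assoc _ L, hLQ]
    noncomm_ring
  rw [Matrix.mul_sub, Matrix.sub_mul, commutator, Matrix.mul_smul, Matrix.smul_mul, sub_apply,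
    smul_apply, conj_single_apply_self, mul_diagonal_sub_diagonal_mul_apply_self, smul_eq_mul,
    zero_sub, neg_mul]

end Matrix

theorem forced_lax_eigenvalue_dynamics_general (N : ℕ) (hN : 0 < N)
    (L B Ψ Ψ' : ℝ → Matrix (Fin N) (Fin N) ℝ)
    (lam lam' : ℝ → Fin N → ℝ) (ρ : ℝ → ℝ)
    (hBanti : ∀ t, (B t)ᵀ = -(B t))
    (horth : ∀ t, (Ψ t)ᵀ * Ψ t = 1)
    (heig : ∀ t, L t * Ψ t = Ψ t * Matrix.diagonal (lam t))
    (hΨ : ∀ t, ∀ i j : Fin N, HasDerivAt (fun s => Ψ s i j) (Ψ' t i j) t)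
    (hlam : ∀ t, ∀ j : Fin N, HasDerivAt (fun s => lam s j) (lam' t j) t)
    (hLax : ∀ t, ∀ i j : Fin N, HasDerivAt (fun s => L s i j)
      ((B t * L t - L t * B t -
        ρ t • Matrix.single (⟨0, hN⟩ : Fin N) (⟨0, hN⟩ : Fin N) (1 : ℝ)) i j) t) :
    ∀ t : ℝ,
      ((Ψ t)ᵀ * Ψ' t - (Ψ t)ᵀ * B t * Ψ t)ᵀ =
          -((Ψ t)ᵀ * Ψ' t - (Ψ t)ᵀ * B t * Ψ t) ∧
      (∀ j : Fin N, lam' t j = -ρ t * (Ψ t ⟨0, hN⟩ j) ^ 2) ∧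
      ∑ j : Fin N, lam' t j = -ρ t := by
  intro t
  have hΨt : HasEntrywiseDerivAt (fun s => (Ψ s)ᵀ) (Ψ' t)ᵀ t :=
    HasEntrywiseDerivAt.transpose (hΨ t)
  have hskew : (Ψ' t)ᵀ * Ψ t + (Ψ t)ᵀ * Ψ' t = 0 :=
    (hΨt.mul (hΨ t)).unique (by simpa only [horth] using hasEntrywiseDerivAt_const 1 t)
  have hdiag : (fun s => (Ψ s)ᵀ * L s * Ψ s) = fun s => diagonal (lam s) := by
    funext s
    rw [Matrix.mul_assoc, heig, ← Matrix.mul_assoc, horth, Matrix.one_mul]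
  have hderiv : _ = diagonal (lam' t) :=
    ((hΨt.mul (hLax t)).mul (hΨ t)).unique (hdiag ▸ hasEntrywiseDerivAt_diagonal (hlam t))
  have hlam' : ∀ j, lam' t j = -ρ t * Ψ t ⟨0, hN⟩ j ^ 2 := fun j => by
    rw [← diagonal_apply_eq (lam' t) j, ← hderiv,
      deriv_conj_apply_self_of_orthogonal (horth t) hskew (heig t),
      conj_forced_lax_apply_self (horth t) (heig t)]
  refine ⟨?_, hlam', ?_⟩
  · have hA : ((Ψ t)ᵀ * Ψ' t)ᵀ = -((Ψ t)ᵀ * Ψ' t) := by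
      rw [transpose_mul, transpose_transpose, eq_neg_iff_add_eq_zero, hskew]
    rw [transpose_sub, hA, transpose_conj_eq_neg (hBanti t)]
    abel
  · rw [Finset.sum_congr rfl fun j _ => hlam' j, ← Finset.mul_sum,
      sum_sq_apply_eq_one (horth t), mul_one]

/-- Eigenvalue dynamics for the forced Lax equation: A = ΨᵀΨ̇ - ΨᵀBΨ is
antisymmetric, λ̇_j = -ρ f_j², and ∑_j λ̇_j = -ρ. -/
theorem forced_lax_eigenvalue_dynamics (N : ℕ) (hN : 0 < N)
    (L B Ψ Ψ' : ℝ → Matrix (Fin N) (Fin N) ℝ)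
    (lam lam' : ℝ → Fin N → ℝ) (ρ : ℝ → ℝ)
    (hLsymm : ∀ t, (L t).IsSymm)
    (hBanti : ∀ t, (B t)ᵀ = -(B t))
    (hdistinct : ∀ t, ∀ i j : Fin N, i ≠ j → lam t i ≠ lam t j)
    (horth : ∀ t, (Ψ t)ᵀ * Ψ t = 1)
    (heig : ∀ t, L t * Ψ t = Ψ t * Matrix.diagonal (lam t))
    (hΨ : ∀ t, ∀ i j : Fin N, HasDerivAt (fun s => Ψ s i j) (Ψ' t i j) t)
    (hlam : ∀ t, ∀ j : Fin N, HasDerivAt (fun s => lam s j) (lam' t j) t)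
    (hLax : ∀ t, ∀ i j : Fin N, HasDerivAt (fun s => L s i j)
      ((B t * L t - L t * B t -
        ρ t • Matrix.single (⟨0, hN⟩ : Fin N) (⟨0, hN⟩ : Fin N) (1 : ℝ)) i j) t) :
    ∀ t : ℝ,
      ((Ψ t)ᵀ * Ψ' t - (Ψ t)ᵀ * B t * Ψ t)ᵀ =
          -((Ψ t)ᵀ * Ψ' t - (Ψ t)ᵀ * B t * Ψ t) ∧
      (∀ j : Fin N, lam' t j = -ρ t * (Ψ t ⟨0, hN⟩ j) ^ 2) ∧
      ∑ j : Fin N, lam' t j = -ρ t :=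
  forced_lax_eigenvalue_dynamics_general N hN L B Ψ Ψ' lam lam' ρ hBanti horth heig hΨ hlam hLax
end
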